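/- arXiv:1411.4573 — 2 statements merged into one kernel-verified Lean document; each statement's English description precedes it below -/
import Mathlib

section
/- For every instance of multi-depot k-MLP with positive integer edge costs and every time horizon T, the optimal value of the configuration linear program (LP2_P) is at least BNSLB = ∑_{ℓ=1}^{n} BNS(k,ℓ); i.e., every feasible solution (x,z) of (LP2_P) has objective value ∑_{v,t} t·x_{v,t} ≥ BNSLB. -/
open Finset

/-- `c` is a metric with positive integer costs between distinct nodes. -/
def IsIntMetric {V : Type*} (c : V → V → ℕ) : Prop :=
  (∀ u, c u u = 0) ∧ (∀ u v, c u v = c v u) ∧ (∀ u v x, c u x ≤ c u v + c v x) ∧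
    ∀ u v, u ≠ v → 1 ≤ c u v

/-- Cost of a walk (a list of vertices): sum of costs of consecutive edges. -/
def walkCost {V : Type*} (c : V → V → ℕ) : List V → ℕ
  | [] => 0
  | [_] => 0
  | a :: b :: l => c a b + walkCost c (b :: l)

/-- `P⃗` is a configuration for time `t`: a `k`-tuple of simple paths, the `i`-th rooted
at `r i`, each of total edge cost at most `t`. -/
def IsConfig {V : Type*} {k : ℕ} (c : V → V → ℕ) (r : Fin k → V) (t : ℕ)
    (P : Fin k → List V) : Prop :=
  ∀ i, (P i).Nodup ∧ (P i).head? = some (r i) ∧ walkCost c (P i) ≤ t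

/-- The `(k,ℓ)`-bottleneck-stroll value `BNS(k,ℓ)`. -/
noncomputable def BNS {V : Type*} [Fintype V] [DecidableEq V] {k : ℕ}
    (c : V → V → ℕ) (r : Fin k → V) (ℓ : ℕ) : ℕ :=
  sInf {m : ℕ | ∃ P : Fin k → List V,
    (∀ i, (P i).head? = some (r i)) ∧
    ℓ ≤ (Finset.univ.biUnion fun i => (P i).toFinset).card ∧
    ∀ i, walkCost c (P i) ≤ m}

/-- `BNSLB = ∑_{ℓ=1}^n BNS(k,ℓ)`. -/
noncomputable def BNSLB {V : Type*} [Fintype V] [DecidableEq V] {k : ℕ}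
    (c : V → V → ℕ) (r : Fin k → V) : ℕ :=
  ∑ ℓ ∈ Finset.Icc 1 (Fintype.card V), BNS c r ℓ


/-! A configuration for time `t` witnesses `BNS(k,ℓ) ≤ t` for every `ℓ` up to the number of nodes
it covers, so it covers at most `N(t) = #{ℓ ≤ n | BNS(k,ℓ) ≤ t}` nodes, all roots among them.
Averaging over the configurations weighted by `z_{·,t}` bounds the covered mass of the non-roots:
`∑_v ∑_{t' ≤ t} x_{v,t'} ≤ N(t) - |roots|`. At `t = T` the covering constraints force `N(T) = n`,
i.e. `BNS(k,ℓ) ≤ T` for all `ℓ`. Then `BNSLB = ∑_{s < T} (n - N(s))` by layer-cake summation, while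
Abel summation writes the objective as `∑_{s < T} ∑_v ∑_{s < t ≤ T} x_{v,t}`, which termwise is at
least `|non-roots| - (N(s) - |roots|) = n - N(s)`. -/

lemma Finset.sum_eq_sum_range_card_filter_lt {α : Type*} {A : Finset α} {g : α → ℕ} {T : ℕ}
    (hg : ∀ a ∈ A, g a ≤ T) : ∑ a ∈ A, g a = ∑ s ∈ range T, #{a ∈ A | s < g a} := by
  simp_rw [card_filter]
  rw [sum_comm]
  refine sum_congr rfl fun a ha => ?_
  have hrange : {s ∈ range T | s < g a} = range (g a) := by
    ext s
    simp only [mem_filter, mem_range]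
    have := hg a ha
    omega
  rw [← card_filter, hrange, card_range]

lemma Finset.sum_Icc_mul_eq_sum_range_sub {R : Type*} [CommRing R] (y : ℕ → R) (T : ℕ) :
    ∑ t ∈ Icc 1 T, (t : R) * y t =
      ∑ s ∈ range T, (∑ t ∈ Icc 1 T, y t - ∑ t ∈ Icc 1 s, y t) := by
  induction T with
  | zero => simp
  | succ T ih =>
    rw [sum_Icc_succ_top (by omega), sum_Icc_succ_top (by omega), sum_range_succ, ih]
    simp only [add_sub_right_comm _ (y (T + 1)), sum_add_distrib, sum_const, card_range,
      nsmul_eq_mul]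
    push_cast
    ring

lemma Finset.sum_le_of_le_sum_filter {ι α : Type*} {S : Finset α} {F : Finset ι}
    {w : ι → ℝ} {f : α → ℝ} {m : ℝ} (p : ι → α → Prop) [DecidableRel p]
    (hw0 : ∀ i ∈ F, 0 ≤ w i) (hw1 : ∑ i ∈ F, w i ≤ 1) (hm : 0 ≤ m)
    (hcard : ∀ i ∈ F, (#{a ∈ S | p i a} : ℝ) ≤ m)
    (hf : ∀ a ∈ S, f a ≤ ∑ i ∈ F with p i a, w i) : ∑ a ∈ S, f a ≤ m :=
  calc ∑ a ∈ S, f a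
      ≤ ∑ a ∈ S, ∑ i ∈ F with p i a, w i := sum_le_sum hf
    _ = ∑ i ∈ F, (#{a ∈ S | p i a} : ℝ) * w i := by
      simp_rw [sum_filter, card_filter]
      rw [sum_comm]
      push_cast
      simp_rw [sum_mul, ite_mul, one_mul, zero_mul]
    _ ≤ ∑ i ∈ F, m * w i :=
      sum_le_sum fun i hi => mul_le_mul_of_nonneg_right (hcard i hi) (hw0 i hi)
    _ = m * ∑ i ∈ F, w i := (mul_sum ..).symm
    _ ≤ m := mul_le_of_le_one_right hm hw1

section Configurations

variable {V : Type*} [DecidableEq V] {k : ℕ}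

def coveredNodes (P : Fin k → List V) : Finset V :=
  univ.biUnion fun i => (P i).toFinset

noncomputable def numBNSLe [Fintype V] (c : V → V → ℕ) (r : Fin k → V) (t : ℕ) : ℕ :=
  #{ℓ ∈ Icc 1 (Fintype.card V) | BNS c r ℓ ≤ t}

lemma image_subset_coveredNodes [Fintype V] {r : Fin k → V} {P : Fin k → List V}
    (hP : ∀ i, (P i).head? = some (r i)) : univ.image r ⊆ coveredNodes P := by
  simp only [subset_iff, mem_image, mem_univ, true_and, coveredNodes, mem_biUnion,
    List.mem_toFinset, forall_exists_index, forall_apply_eq_imp_iff]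
  exact fun i => ⟨i, List.mem_of_mem_head? (hP i)⟩

lemma card_coveredNodes_le_numBNSLe [Fintype V] {c : V → V → ℕ} {r : Fin k → V} {t : ℕ}
    {P : Fin k → List V} (hP : ∀ i, (P i).head? = some (r i))
    (hcost : ∀ i, walkCost c (P i) ≤ t) : #(coveredNodes P) ≤ numBNSLe c r t := by
  have hsub : Icc 1 #(coveredNodes P) ⊆ {ℓ ∈ Icc 1 (Fintype.card V) | BNS c r ℓ ≤ t} := by
    intro ℓ hℓ
    rw [mem_Icc] at hℓ
    have hle := card_le_univ (coveredNodes P)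
    exact mem_filter.2 ⟨mem_Icc.2 ⟨hℓ.1, hℓ.2.trans hle⟩, Nat.sInf_le ⟨P, hP, hℓ.2, hcost⟩⟩
  simpa [numBNSLe] using card_le_card hsub

lemma card_image_le_numBNSLe [Fintype V] (c : V → V → ℕ) (r : Fin k → V) (t : ℕ) :
    #(univ.image r) ≤ numBNSLe c r t := by
  have hroots : coveredNodes (fun i => [r i]) = univ.image r := by
    ext v
    simp [coveredNodes, eq_comm]
  simpa [hroots] using card_coveredNodes_le_numBNSLe (c := c) (t := t)
    (P := fun i => [r i]) (fun i => rfl) (fun i => Nat.zero_le t)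

lemma card_nonroots_mem_add_card_image_le_numBNSLe [Fintype V] {c : V → V → ℕ}
    {r : Fin k → V} {t : ℕ} {P : Fin k → List V} (hP : IsConfig c r t P) :
    #{v ∈ {v | ∀ i, v ≠ r i} | ∃ i, v ∈ P i} + #(univ.image r) ≤ numBNSLe c r t := by
  have hheads i := (hP i).2.1
  refine le_trans ?_ (card_coveredNodes_le_numBNSLe hheads fun i => (hP i).2.2)
  rw [← card_union_of_disjoint]
  · refine card_le_card (union_subset ?_ (image_subset_coveredNodes hheads))
    intro v hv
    simp only [mem_filter, mem_univ, true_and] at hv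
    obtain ⟨i, hi⟩ := hv.2
    exact mem_biUnion.2 ⟨i, mem_univ i, List.mem_toFinset.2 hi⟩
  · simp only [disjoint_left, mem_filter, mem_univ, true_and, mem_image, not_exists]
    exact fun v hv i hi => hv.1 i hi.symm

end Configurations

section LinearProgram

variable {V : Type*} [Fintype V] [DecidableEq V] {k : ℕ}

lemma card_nonroots_add_card_image (r : Fin k → V) :
    #{v | ∀ i, v ≠ r i} + #(univ.image r) = Fintype.card V := by
  have hcompl : ({v | ∀ i, v ≠ r i} : Finset V) = (univ.image r)ᶜ := by
    ext v
    simp [eq_comm]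
  rw [hcompl, add_comm, card_add_card_compl]

lemma sum_nonroots_add_card_image_le_numBNSLe {c : V → V → ℕ} {r : Fin k → V} {t : ℕ}
    (w : (Fin k → List V) →₀ ℝ) (X : V → ℝ) (hw0 : ∀ P, 0 ≤ w P)
    (hsupp : ∀ P ∈ w.support, IsConfig c r t P) (hw1 : ∑ P ∈ w.support, w P ≤ 1)
    (hX : ∀ v, (∀ i, v ≠ r i) → X v ≤ ∑ P ∈ w.support.filter (fun P => ∃ i, v ∈ P i), w P) :
    ∑ v ∈ univ.filter (fun v => ∀ i, v ≠ r i), X v + #(univ.image r) ≤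
      (numBNSLe c r t : ℝ) := by
  rw [← le_sub_iff_add_le]
  refine sum_le_of_le_sum_filter (fun P v => ∃ i, v ∈ P i) (fun P _ => hw0 P) hw1 ?_
    (fun P hP => ?_) fun v hv => hX v (mem_filter.1 hv).2
  · exact sub_nonneg.2 (mod_cast card_image_le_numBNSLe c r t)
  · exact le_sub_iff_add_le.2 (mod_cast card_nonroots_mem_add_card_image_le_numBNSLe (hsupp P hP))

lemma BNS_le_of_card_le_numBNSLe {c : V → V → ℕ} {r : Fin k → V} {t : ℕ}
    (h : Fintype.card V ≤ numBNSLe c r t) : ∀ ℓ ∈ Icc 1 (Fintype.card V), BNS c r ℓ ≤ t := by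
  refine card_filter_eq_iff.1 (le_antisymm (card_filter_le _ _) ?_)
  simpa [numBNSLe] using h

lemma BNSLB_eq_sum_range_sub_numBNSLe {c : V → V → ℕ} {r : Fin k → V} {T : ℕ}
    (h : ∀ ℓ ∈ Icc 1 (Fintype.card V), BNS c r ℓ ≤ T) :
    (BNSLB c r : ℝ) = ∑ s ∈ range T, ((Fintype.card V : ℝ) - numBNSLe c r s) := by
  rw [BNSLB, sum_eq_sum_range_card_filter_lt h]
  push_cast
  refine sum_congr rfl fun s _ => eq_sub_of_add_eq ?_
  have := card_filter_add_card_filter_not (s := Icc 1 (Fintype.card V)) (fun ℓ => s < BNS c r ℓ)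
  simp only [not_lt, Nat.card_Icc, add_tsub_cancel_right] at this
  exact_mod_cast this

end LinearProgram

theorem LP2_value_at_least_BNSLB_general
    {V : Type*} [Fintype V] [DecidableEq V]
    (c : V → V → ℕ)
    (k : ℕ) (r : Fin k → V) (T : ℕ)
    (x : V → ℕ → ℝ) (z : ℕ → ((Fin k → List V) →₀ ℝ))
    (hz0 : ∀ t P, 0 ≤ z t P)
    (hzsupp : ∀ t ∈ Finset.Icc 1 T, ∀ P ∈ (z t).support, IsConfig c r t P)
    (hcover : ∀ v : V, (∀ i, v ≠ r i) → 1 ≤ ∑ t ∈ Finset.Icc 1 T, x v t)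
    (hz1 : ∀ t ∈ Finset.Icc 1 T, ∑ P ∈ (z t).support, z t P ≤ 1)
    (hvt : ∀ v : V, (∀ i, v ≠ r i) → ∀ t ∈ Finset.Icc 1 T,
      ∑ t' ∈ Finset.Icc 1 t, x v t' ≤
        ∑ P ∈ (z t).support.filter (fun P => ∃ i, v ∈ P i), z t P) :
    (BNSLB c r : ℝ) ≤
      ∑ v ∈ Finset.univ.filter (fun v => ∀ i, v ≠ r i),
        ∑ t ∈ Finset.Icc 1 T, (t : ℝ) * x v t := by
  set S := univ.filter (fun v : V => ∀ i, v ≠ r i)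
  have hprefix : ∀ t ≤ T,
      ∑ v ∈ S, ∑ t' ∈ Icc 1 t, x v t' + #(univ.image r) ≤ (numBNSLe c r t : ℝ) := by
    rintro (_ | t) ht
    · simpa using card_image_le_numBNSLe c r 0
    · have ht' : t + 1 ∈ Icc 1 T := mem_Icc.2 ⟨by omega, ht⟩
      exact sum_nonroots_add_card_image_le_numBNSLe (z (t + 1)) _ (hz0 _) (hzsupp _ ht')
        (hz1 _ ht') fun v hv => hvt v hv _ ht'
  have hcovered : (#S : ℝ) ≤ ∑ v ∈ S, ∑ t ∈ Icc 1 T, x v t := by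
    simpa using card_nsmul_le_sum S _ 1 fun v hv => hcover v (mem_filter.1 hv).2
  have hcard : (#S : ℝ) + #(univ.image r) = Fintype.card V := by
    exact_mod_cast card_nonroots_add_card_image r
  have hBNS : ∀ ℓ ∈ Icc 1 (Fintype.card V), BNS c r ℓ ≤ T := by
    refine BNS_le_of_card_le_numBNSLe ?_
    have := hprefix T le_rfl
    exact_mod_cast (by linarith : (Fintype.card V : ℝ) ≤ numBNSLe c r T)
  calc (BNSLB c r : ℝ) = ∑ s ∈ range T, ((Fintype.card V : ℝ) - numBNSLe c r s) :=
        BNSLB_eq_sum_range_sub_numBNSLe hBNS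
    _ ≤ ∑ s ∈ range T,
          (∑ v ∈ S, ∑ t ∈ Icc 1 T, x v t - ∑ v ∈ S, ∑ t ∈ Icc 1 s, x v t) :=
        sum_le_sum fun s hs => by linarith [hprefix s (mem_range.1 hs).le]
    _ = ∑ v ∈ S, ∑ t ∈ Icc 1 T, (t : ℝ) * x v t := by
        simp_rw [sum_Icc_mul_eq_sum_range_sub, ← sum_sub_distrib]
        exact sum_comm

/-- every feasible solution `(x, z)` of the configuration LP (LP2_P) with
time horizon `T` has objective value `∑_{v,t} t·x_{v,t} ≥ BNSLB`. -/
theorem LP2_value_at_least_BNSLB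
    {V : Type*} [Fintype V] [DecidableEq V]
    (c : V → V → ℕ) (hc : IsIntMetric c)
    (k : ℕ) (hk : 0 < k) (r : Fin k → V) (T : ℕ)
    (x : V → ℕ → ℝ) (z : ℕ → ((Fin k → List V) →₀ ℝ))
    (hx0 : ∀ v t, 0 ≤ x v t)
    (hz0 : ∀ t P, 0 ≤ z t P)
    (hzsupp : ∀ t ∈ Finset.Icc 1 T, ∀ P ∈ (z t).support, IsConfig c r t P)
    (hcover : ∀ v : V, (∀ i, v ≠ r i) → 1 ≤ ∑ t ∈ Finset.Icc 1 T, x v t)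
    (hz1 : ∀ t ∈ Finset.Icc 1 T, ∑ P ∈ (z t).support, z t P ≤ 1)
    (hvt : ∀ v : V, (∀ i, v ≠ r i) → ∀ t ∈ Finset.Icc 1 T,
      ∑ t' ∈ Finset.Icc 1 t, x v t' ≤
        ∑ P ∈ (z t).support.filter (fun P => ∃ i, v ∈ P i), z t P) :
    (BNSLB c r : ℝ) ≤
      ∑ v ∈ Finset.univ.filter (fun v => ∀ i, v ≠ r i),
        ∑ t ∈ Finset.Icc 1 T, (t : ℝ) * x v t :=
  LP2_value_at_least_BNSLB_general c k r T x z hz0 hzsupp hcover hz1 hvt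
end

section
/- Let D = (V,A) be an Eulerian digraph with nonnegative integer edge weights (weighted in-degree equals weighted out-degree at every node), fix an integer K ≥ 0 and set Λ_D(x,y) := min{K, λ_D(x,y)}. Let e = (t,u) and f = (u,v) be edges such that splitting off e and f by a given positive integer amount x ≤ min{w_e, w_f} is splittable, i.e., the resulting digraph D^{ef} satisfies λ_{D^{ef}}(a,b) ≥ Λ_D(a,b) for all nodes a,b ≠ u. Let f' = (u,v') be any edge leaving u (possibly f' = f), and let X ⊆ V be a set with u ∉ X and v' ∈ X that is tight for some pair of nodes a,b ≠ u, i.e., a and b are separated by X and min{|δ^in(X)|, |δ^out(X)|} = Λ_D(a,b) (degrees weighted). Then X is still tight for a,b in D^{ef}: min{|δ^in_{D^{ef}}(X)|, |δ^out_{D^{ef}}(X)|} = Λ_{D^{ef}}(a,b), and Λ_{D^{ef}}(a,b) = Λ_D(a,b). -/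
open Finset

/-- Total weight of arcs entering the set `X`. -/
def inW {V : Type*} [Fintype V] [DecidableEq V] (w : V → V → ℕ) (X : Finset V) : ℕ :=
  ∑ p ∈ Xᶜ, ∑ q ∈ X, w p q

/-- Total weight of arcs leaving the set `X`. -/
def outW {V : Type*} [Fintype V] [DecidableEq V] (w : V → V → ℕ) (X : Finset V) : ℕ :=
  ∑ p ∈ X, ∑ q ∈ Xᶜ, w p q

/-- `λ_D(x,y)`: the maximum number of edge-disjoint directed x→y paths; by Menger's
theorem, the minimum total weight of a directed x-y cut, taken as the definition. -/
noncomputable def lambdaW {V : Type*} [Fintype V] [DecidableEq V]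
    (w : V → V → ℕ) (x y : V) : ℕ :=
  sInf {m : ℕ | ∃ X : Finset V, x ∈ X ∧ y ∉ X ∧ outW w X = m}

/-- The weights obtained from `w` by splitting off the edges `e = (t,u)` and `f = (u,v)`
by amount `x`: subtract `x` from `w t u` and `w u v` and add `x` to `w t v`. -/
def splitW {V : Type*} [DecidableEq V] (w : V → V → ℕ) (t u v : V) (x : ℕ) :
    V → V → ℕ :=
  fun a b =>
    w a b + (if a = t ∧ b = v then x else 0)
      - (if a = t ∧ b = u then x else 0) - (if a = u ∧ b = v then x else 0)

/-- `a` and `b` are separated by `X`. -/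
def Separates {V : Type*} (X : Finset V) (a b : V) : Prop :=
  (a ∈ X ∧ b ∉ X) ∨ (a ∉ X ∧ b ∈ X)

/-! Since `u ∉ X`, the arc `(u,v)` can only enter `X`, the arc `(t,u)` can only
leave it, and the new arc `(t,v)` crosses it only if `t` and `v` lie on different sides.
So splitting either leaves both cut values of `X` unchanged, or (when `t, v ∈ X`) lowers both
by `x`. In an Eulerian digraph both cut values of `X` are equal, hence equal to `Λ_D(a,b)` by
tightness, while `λ_{D^{ef}}(a,b)` is at most the larger cut value of `X` after splitting and,
by splittability, at least `Λ_D(a,b)`. This rules out the second case and forces equality in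
the first. -/

section Cuts

variable {V : Type*} [Fintype V] [DecidableEq V]

lemma sum_sum_compl_ite_and (Y : Finset V) (c d : V) (x : ℕ) :
    ∑ p ∈ Y, ∑ q ∈ Yᶜ, (if p = c ∧ q = d then x else 0) = if c ∈ Y ∧ d ∉ Y then x else 0 := by
  simp [ite_and, Finset.sum_ite_eq', Finset.mem_compl]

lemma inW_eq_outW_compl (w : V → V → ℕ) (X : Finset V) : inW w X = outW w Xᶜ := by
  rw [inW, outW, compl_compl]

lemma inW_eq_outW_of_eulerian (w : V → V → ℕ) (heul : ∀ u : V, ∑ a : V, w a u = ∑ a : V, w u a)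
    (X : Finset V) : inW w X = outW w X := by
  have hin : inW w X + ∑ p ∈ X, ∑ q ∈ X, w q p = ∑ p ∈ X, ∑ q : V, w q p := by
    rw [inW, Finset.sum_comm, ← Finset.sum_add_distrib]
    exact Finset.sum_congr rfl fun p _ => Finset.sum_compl_add_sum X _
  have hout : outW w X + ∑ p ∈ X, ∑ q ∈ X, w p q = ∑ p ∈ X, ∑ q : V, w p q := by
    rw [outW, ← Finset.sum_add_distrib]
    exact Finset.sum_congr rfl fun p _ => by rw [add_comm, Finset.sum_add_sum_compl]
  have hdeg : ∑ p ∈ X, ∑ q : V, w q p = ∑ p ∈ X, ∑ q : V, w p q :=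
    Finset.sum_congr rfl fun p _ => heul p
  have hinside : ∑ p ∈ X, ∑ q ∈ X, w q p = ∑ p ∈ X, ∑ q ∈ X, w p q := Finset.sum_comm
  omega

lemma lambdaW_le_outW (w : V → V → ℕ) {a b : V} {Y : Finset V} (ha : a ∈ Y) (hb : b ∉ Y) :
    lambdaW w a b ≤ outW w Y :=
  Nat.sInf_le ⟨Y, ha, hb, rfl⟩

lemma lambdaW_le_max_of_separates (w : V → V → ℕ) {X : Finset V} {a b : V}
    (hsep : Separates X a b) : lambdaW w a b ≤ max (inW w X) (outW w X) := by
  rcases hsep with ⟨ha, hb⟩ | ⟨ha, hb⟩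
  · exact le_max_of_le_right (lambdaW_le_outW w ha hb)
  · refine le_max_of_le_left ?_
    rw [inW_eq_outW_compl]
    exact lambdaW_le_outW w (Finset.mem_compl.2 ha) (by simpa using hb)

end Cuts

section Splitting

variable {V : Type*} [DecidableEq V] (w : V → V → ℕ) {t u v : V} {x : ℕ}

lemma splitW_add_add (hxe : x ≤ w t u) (hxf : x ≤ w u v) (p q : V) :
    splitW w t u v x p q + (if p = t ∧ q = u then x else 0) + (if p = u ∧ q = v then x else 0)
      = w p q + (if p = t ∧ q = v then x else 0) := by
  unfold splitW
  by_cases hpt : p = t <;> by_cases hpu : p = u <;> by_cases hqu : q = u <;>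
    by_cases hqv : q = v <;> simp_all

variable [Fintype V]

lemma outW_splitW_add_add (hxe : x ≤ w t u) (hxf : x ≤ w u v) (Y : Finset V) :
    outW (splitW w t u v x) Y + (if t ∈ Y ∧ u ∉ Y then x else 0)
        + (if u ∈ Y ∧ v ∉ Y then x else 0)
      = outW w Y + (if t ∈ Y ∧ v ∉ Y then x else 0) := by
  simp only [outW, ← sum_sum_compl_ite_and, ← Finset.sum_add_distrib, splitW_add_add w hxe hxf]

lemma inW_splitW_add_add (hxe : x ≤ w t u) (hxf : x ≤ w u v) (Y : Finset V) :
    inW (splitW w t u v x) Y + (if t ∉ Y ∧ u ∈ Y then x else 0)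
        + (if u ∉ Y ∧ v ∈ Y then x else 0)
      = inW w Y + (if t ∉ Y ∧ v ∈ Y then x else 0) := by
  simpa only [inW_eq_outW_compl, Finset.mem_compl, not_not]
    using outW_splitW_add_add w hxe hxf Yᶜ

lemma splitW_cuts_of_not_mem (hxe : x ≤ w t u) (hxf : x ≤ w u v) {X : Finset V} (hu : u ∉ X) :
    (outW (splitW w t u v x) X + x = outW w X ∧ inW (splitW w t u v x) X + x = inW w X) ∨
      (outW (splitW w t u v x) X = outW w X ∧ inW (splitW w t u v x) X = inW w X) := by
  have hout := outW_splitW_add_add w hxe hxf X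
  have hin := inW_splitW_add_add w hxe hxf X
  by_cases ht : t ∈ X <;> by_cases hv : v ∈ X <;> simp [ht, hv, hu] at hout hin <;> omega

end Splitting

theorem tight_set_monotone_under_splitting_general
    {V : Type*} [Fintype V] [DecidableEq V]
    (w : V → V → ℕ) (K : ℕ)
    (heul : ∀ u : V, ∑ a : V, w a u = ∑ a : V, w u a)
    (t u v : V)
    (x : ℕ) (hx : 0 < x) (hxe : x ≤ w t u) (hxf : x ≤ w u v)
    (hsplit : ∀ a b : V, a ≠ u → b ≠ u →
      min K (lambdaW w a b) ≤ lambdaW (splitW w t u v x) a b)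
    (X : Finset V) (huX : u ∉ X)
    (a b : V) (ha : a ≠ u) (hb : b ≠ u) (hsep : Separates X a b)
    (htight : min (inW w X) (outW w X) = min K (lambdaW w a b)) :
    min (inW (splitW w t u v x) X) (outW (splitW w t u v x) X) =
        min K (lambdaW (splitW w t u v x) a b) ∧
      min K (lambdaW (splitW w t u v x) a b) = min K (lambdaW w a b) := by
  have hbalanced := inW_eq_outW_of_eulerian w heul X
  have hupper := lambdaW_le_max_of_separates (splitW w t u v x) hsep
  have hlower := hsplit a b ha hb
  rcases splitW_cuts_of_not_mem w hxe hxf huX with ⟨hout, hin⟩ | ⟨hout, hin⟩ <;> omega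

/-- monotonicity of tight sets under splitting off:
in an Eulerian weighted digraph, if splitting off `e = (t,u)`, `f = (u,v)` by amount `x`
is splittable, `f' = (u,v')` is an edge leaving `u`, and `X` with `u ∉ X`, `v' ∈ X` is
tight for some pair `a, b ≠ u`, then `X` is still tight for `a, b` after the splitting,
and `Λ(a,b)` is unchanged. -/
theorem tight_set_monotone_under_splitting
    {V : Type*} [Fintype V] [DecidableEq V]
    (w : V → V → ℕ) (K : ℕ)
    (heul : ∀ u : V, ∑ a : V, w a u = ∑ a : V, w u a)
    (t u v : V) (hut : t ≠ u) (huv : u ≠ v)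
    (he : 0 < w t u) (hf : 0 < w u v)
    (x : ℕ) (hx : 0 < x) (hxe : x ≤ w t u) (hxf : x ≤ w u v)
    (hsplit : ∀ a b : V, a ≠ u → b ≠ u →
      min K (lambdaW w a b) ≤ lambdaW (splitW w t u v x) a b)
    (v' : V) (hv' : 0 < w u v')
    (X : Finset V) (huX : u ∉ X) (hv'X : v' ∈ X)
    (a b : V) (ha : a ≠ u) (hb : b ≠ u) (hsep : Separates X a b)
    (htight : min (inW w X) (outW w X) = min K (lambdaW w a b)) :
    min (inW (splitW w t u v x) X) (outW (splitW w t u v x) X) =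
        min K (lambdaW (splitW w t u v x) a b) ∧
      min K (lambdaW (splitW w t u v x) a b) = min K (lambdaW w a b) :=
  tight_set_monotone_under_splitting_general w K heul t u v x hx hxe hxf hsplit X huX a b ha hb hsep
    htight
end
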